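/- Decomposition of the generalized Walsh–Hadamard transform into binary components: Let n ≥ 1, k ≥ 1, q = 2^k, and let f : F_2^n → Z_q with binary components a_0, ..., a_{k-1} : F_2^n → F_2, i.e., f(x) = a_0(x) + 2a_1(x) + ... + 2^{k-1}a_{k-1}(x) in Z_q (each a_i(x) regarded as 0 or 1). For c ∈ F_2^{k-1} let f_c : F_2^n → F_2 be f_c(x) = c_0 a_0(x) ⊕ ... ⊕ c_{k-2} a_{k-2}(x) ⊕ a_{k-1}(x), and for d ∈ F_2^{k-1} let ι(d) = Σ_{j=0}^{k-2} d_j 2^j ∈ Z_q. Then for all u ∈ F_2^n: H_f(u) = 2^{-(k-1)} Σ_{(c,d) ∈ F_2^{k-1} × F_2^{k-1}} (-1)^{c·d} ζ_q^{ι(d)} W_{f_c}(u), where H_f(u) = 2^{-n/2} Σ_{x} ζ_q^{f(x)} (-1)^{u·x} and W_g(u) = 2^{-n/2} Σ_{x} (-1)^{g(x) + u·x} for Boolean g. -/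

import Mathlib

open Complex Finset

noncomputable section

/-- `ζ_q = exp(2πi/q)`. -/
def zetaC (q : ℕ) : ℂ := Complex.exp (2 * Real.pi * Complex.I / q)

/-- Hamming weight of a binary vector. -/
def wtv {n : ℕ} (x : Fin n → ZMod 2) : ℕ := ∑ j, (x j).val

/-- `(-1)^{u·x}` where `u·x` is the dot product over `F_2`. -/
def chr {n : ℕ} (u x : Fin n → ZMod 2) : ℂ := (-1 : ℂ) ^ (∑ j, u j * x j : ZMod 2).val

/-- `2^{-n/2}` as a complex number. -/
def nrm (n : ℕ) : ℂ := (((2 : ℝ) ^ (-(n : ℝ) / 2) : ℝ) : ℂ)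

/-- Component combination: `f_c(x) = c_0 a_0(x) ⊕ ... ⊕ c_{k-2} a_{k-2}(x) ⊕ a_{k-1}(x)`. -/
def comb {n k : ℕ} (hk : 1 ≤ k) (a : Fin k → (Fin n → ZMod 2) → ZMod 2)
    (c : Fin (k - 1) → ZMod 2) (x : Fin n → ZMod 2) : ZMod 2 :=
  (∑ i : Fin (k - 1), c i * a (Fin.castLE (Nat.sub_le k 1) i) x) + a ⟨k - 1, by omega⟩ x

/-- `ι(d) = Σ_{j=0}^{k-2} d_j 2^j` as a natural number. -/
def iotaN {k : ℕ} (d : Fin (k - 1) → ZMod 2) : ℕ := ∑ j : Fin (k - 1), (d j).val * 2 ^ (j : ℕ)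

/-- The generalized Walsh-Hadamard transform `H_f(u) = 2^{-n/2} Σ_x ζ_q^{f(x)} (-1)^{u·x}`. -/
def genH {n q : ℕ} (f : (Fin n → ZMod 2) → ZMod q) (u : Fin n → ZMod 2) : ℂ :=
  nrm n * ∑ x, zetaC q ^ (f x).val * chr u x

/-- The Walsh-Hadamard transform of a Boolean function,
`W_g(u) = 2^{-n/2} Σ_x (-1)^{g(x)+u·x}`. -/
def WHB {n : ℕ} (g : (Fin n → ZMod 2) → ZMod 2) (u : Fin n → ZMod 2) : ℂ :=
  nrm n * ∑ x, (-1 : ℂ) ^ ((g x).val + (∑ j, u j * x j : ZMod 2).val)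

/- Auxiliary lemmas -/

lemma neg_one_pow_mod_two (m : ℕ) : (-1:ℂ)^(m % 2) = (-1)^m := by
  conv_rhs => rw [← Nat.div_add_mod m 2, pow_add, pow_mul]
  norm_num

lemma sg_add (s t : ZMod 2) : (-1:ℂ)^((s+t).val) = (-1)^s.val * (-1)^t.val := by
  rw [ZMod.val_add, neg_one_pow_mod_two, pow_add]

lemma sum_zmod2 (f : ZMod 2 → ℂ) : ∑ s : ZMod 2, f s = f 0 + f 1 := by
  have h : (univ : Finset (ZMod 2)) = {0, 1} := by decide
  rw [h, Finset.sum_insert (by decide), Finset.sum_singleton]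

lemma sg_sum' {ι : Type*} (s : Finset ι) (g : ι → ZMod 2) :
    (-1:ℂ)^((∑ i ∈ s, g i).val) = ∏ i ∈ s, (-1:ℂ)^((g i).val) := by
  induction s using Finset.cons_induction with
  | empty => simp
  | cons i s hi ih => rw [Finset.sum_cons, Finset.prod_cons, sg_add, ih]

lemma orth {K : ℕ} (e : Fin K → ZMod 2) :
    ∑ c : Fin K → ZMod 2, (-1:ℂ)^((∑ i, c i * e i).val) =
      if e = 0 then (2:ℂ)^K else 0 := by
  have h1 : ∀ c : Fin K → ZMod 2, (-1:ℂ)^((∑ i, c i * e i).val)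
      = ∏ i, (-1:ℂ)^((c i * e i).val) := fun c => sg_sum' _ _
  simp only [h1]
  have h2 := Finset.prod_univ_sum (fun _ : Fin K => (univ : Finset (ZMod 2)))
      (fun i s => (-1:ℂ)^((s * e i).val))
  rw [Fintype.piFinset_univ] at h2
  rw [← h2]
  have h3 : ∀ z : ZMod 2, (∑ s : ZMod 2, (-1:ℂ)^((s * z).val)) = if z = 0 then 2 else 0 := by
    intro z; rw [sum_zmod2]
    fin_cases z
    · change (-1:ℂ)^(((0:ZMod 2) * 0).val) + (-1:ℂ)^(((1:ZMod 2) * 0).val) = if (0:ZMod 2) = 0 then 2 else 0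
      norm_num
    · change (-1:ℂ)^(((0:ZMod 2) * 1).val) + (-1:ℂ)^(((1:ZMod 2) * 1).val) = if (1:ZMod 2) = 0 then 2 else 0
      norm_num [show ZMod.val (1:ZMod 2) = 1 from rfl]
  by_cases he : e = 0
  · subst he; simp [h3]
  · obtain ⟨i, hi⟩ := Function.ne_iff.mp he
    rw [if_neg he]
    refine Finset.prod_eq_zero (Finset.mem_univ i) ?_
    rw [h3, if_neg (by simpa using hi)]

lemma zeta_pow_half {k : ℕ} (hk : 1 ≤ k) : zetaC (2^k) ^ (2^(k-1)) = -1 := by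
  rw [zetaC, ← Complex.exp_nat_mul, ← Complex.exp_pi_mul_I]
  congr 1
  have h2 : ((2:ℂ)^k) = 2 * (2:ℂ)^(k-1) := by
    rw [← pow_succ']
    congr 1
    omega
  have hne : ((2:ℂ)^(k-1)) ≠ 0 := pow_ne_zero _ two_ne_zero
  push_cast
  rw [h2]
  field_simp

lemma sum_two_pow (K : ℕ) : ∑ m ∈ Finset.range K, 2^m = 2^K - 1 := by
  induction K with
  | zero => simp
  | succ K ih => rw [Finset.sum_range_succ, ih]; have := Nat.one_le_two_pow (n := K); omega

/-- decomposition of the generalized Walsh-Hadamard transform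
into binary components. -/
theorem genH_decomposition {n k : ℕ} (hn : 1 ≤ n) (hk : 1 ≤ k)
    (f : (Fin n → ZMod 2) → ZMod (2 ^ k))
    (a : Fin k → (Fin n → ZMod 2) → ZMod 2)
    (hf : ∀ x, f x = ∑ i : Fin k, (2 ^ (i : ℕ) : ZMod (2 ^ k)) * ((a i x).val : ZMod (2 ^ k)))
    (u : Fin n → ZMod 2) :
    genH f u =
      ((2 : ℂ) ^ (k - 1))⁻¹ *
        ∑ c : Fin (k - 1) → ZMod 2, ∑ d : Fin (k - 1) → ZMod 2,
          chr c d * zetaC (2 ^ k) ^ iotaN d * WHB (comb hk a c) u := by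
  classical
  have key : ∀ x : Fin n → ZMod 2,
      ((2:ℂ)^(k-1))⁻¹ * ∑ c : Fin (k-1) → ZMod 2, ∑ d : Fin (k-1) → ZMod 2,
        chr c d * zetaC (2^k) ^ iotaN d * (-1:ℂ)^((comb hk a c x).val)
      = zetaC (2^k) ^ (f x).val := by
    intro x
    set b : Fin (k-1) → ZMod 2 := fun i => a (Fin.castLE (Nat.sub_le k 1) i) x with hb
    set t : ZMod 2 := a ⟨k-1, by omega⟩ x with ht
    set g : ℕ → ℕ := fun m => if h : m < k then (a ⟨m, h⟩ x).val * 2^m else 0 with hg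
    -- the ℕ-valued sum identity
    have hnat : ∑ i : Fin k, (a i x).val * 2^(i:ℕ) = iotaN b + t.val * 2^(k-1) := by
      have e1 : ∑ i : Fin k, (a i x).val * 2^(i:ℕ) = ∑ m ∈ Finset.range k, g m := by
        rw [← Fin.sum_univ_eq_sum_range g k]
        refine Finset.sum_congr rfl fun i _ => ?_
        simp only [hg]
        rw [dif_pos i.isLt]
      have e2 : iotaN b = ∑ m ∈ Finset.range (k-1), g m := by
        rw [iotaN, ← Fin.sum_univ_eq_sum_range g (k-1)]
        refine Finset.sum_congr rfl fun j _ => ?_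
        simp only [hg]
        rw [dif_pos (lt_of_lt_of_le j.isLt (Nat.sub_le k 1))]
        rfl
      have e3 : ∑ m ∈ Finset.range k, g m = ∑ m ∈ Finset.range (k-1), g m + g (k-1) := by
        conv_lhs => rw [show k = k - 1 + 1 from by omega]
        exact Finset.sum_range_succ g (k-1)
      have e4 : g (k-1) = t.val * 2^(k-1) := by
        simp only [hg]
        rw [dif_pos (by omega : k - 1 < k)]
      rw [e1, e3, ← e2, e4]
    -- value of f x
    have hcast : f x = ((iotaN b + t.val * 2^(k-1) : ℕ) : ZMod (2^k)) := by
      rw [hf x, ← hnat]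
      push_cast
      exact Finset.sum_congr rfl fun i _ => by ring
    have hlt : iotaN b + t.val * 2^(k-1) < 2^k := by
      have h1 : iotaN b ≤ 2^(k-1) - 1 := by
        calc iotaN b ≤ ∑ j : Fin (k-1), 1 * 2^(j:ℕ) := by
              refine Finset.sum_le_sum fun j _ => Nat.mul_le_mul_right _ ?_
              have := ZMod.val_lt (b j); omega
          _ = 2^(k-1) - 1 := by
              simp only [one_mul]
              rw [Fin.sum_univ_eq_sum_range (fun m => 2^m) (k-1), sum_two_pow]
      have h2 : t.val * 2^(k-1) ≤ 1 * 2^(k-1) := by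
        refine Nat.mul_le_mul_right _ ?_
        have := ZMod.val_lt t; omega
      have h3 : 2^(k-1) * 2 = 2^k := by
        rw [← pow_succ]; congr 1; omega
      have h4 : 1 ≤ 2^(k-1) := Nat.one_le_two_pow
      omega
    have hval : (f x).val = iotaN b + t.val * 2^(k-1) := by
      rw [hcast, ZMod.val_cast_of_lt hlt]
    have hcomb : ∀ c, comb hk a c x = (∑ i, c i * b i) + t := fun c => rfl
    have hz2 : ∀ p q : ZMod 2, p + q = 0 ↔ p = q := by decide
    calc ((2:ℂ)^(k-1))⁻¹ * ∑ c : Fin (k-1) → ZMod 2, ∑ d : Fin (k-1) → ZMod 2,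
            chr c d * zetaC (2^k) ^ iotaN d * (-1:ℂ)^((comb hk a c x).val)
        = ((2:ℂ)^(k-1))⁻¹ * ∑ d : Fin (k-1) → ZMod 2, ∑ c : Fin (k-1) → ZMod 2,
            chr c d * zetaC (2^k) ^ iotaN d * (-1:ℂ)^((comb hk a c x).val) := by
          rw [Finset.sum_comm]
      _ = ((2:ℂ)^(k-1))⁻¹ * ∑ d : Fin (k-1) → ZMod 2,
            (zetaC (2^k) ^ iotaN d * (-1:ℂ)^(t.val)) *
              ∑ c : Fin (k-1) → ZMod 2, (-1:ℂ)^((∑ i, c i * (d i + b i)).val) := by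
          refine congrArg _ (Finset.sum_congr rfl fun d _ => ?_)
          rw [Finset.mul_sum]
          refine Finset.sum_congr rfl fun c _ => ?_
          rw [hcomb c, sg_add, chr]
          have hsp : (∑ i, c i * (d i + b i)) = (∑ i, c i * d i) + ∑ i, c i * b i := by
            rw [← Finset.sum_add_distrib]
            exact Finset.sum_congr rfl fun i _ => mul_add _ _ _
          rw [hsp, sg_add]
          ring
      _ = ((2:ℂ)^(k-1))⁻¹ * ∑ d : Fin (k-1) → ZMod 2,
            (zetaC (2^k) ^ iotaN d * (-1:ℂ)^(t.val)) *
              (if d = b then (2:ℂ)^(k-1) else 0) := by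
          refine congrArg _ (Finset.sum_congr rfl fun d _ => ?_)
          rw [orth]
          congr 1
          refine if_congr ?_ rfl rfl
          constructor
          · intro h
            funext i
            have := congrFun h i
            exact (hz2 _ _).mp this
          · intro h
            subst h
            funext i
            exact (hz2 _ _).mpr rfl
      _ = ((2:ℂ)^(k-1))⁻¹ * ((zetaC (2^k) ^ iotaN b * (-1:ℂ)^(t.val)) * (2:ℂ)^(k-1)) := by
          congr 1
          simp [mul_ite, mul_zero, Finset.sum_ite_eq']
      _ = zetaC (2^k) ^ iotaN b * (-1:ℂ)^(t.val) := by
          have hne : ((2:ℂ)^(k-1)) ≠ 0 := pow_ne_zero _ two_ne_zero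
          field_simp
      _ = zetaC (2^k) ^ (f x).val := by
          rw [hval, pow_add, pow_mul', zeta_pow_half hk]
  -- global assembly
  rw [genH]
  have step1 : nrm n * ∑ x, zetaC (2^k) ^ (f x).val * chr u x
      = nrm n * ∑ x, (((2:ℂ)^(k-1))⁻¹ * ∑ c : Fin (k-1) → ZMod 2, ∑ d : Fin (k-1) → ZMod 2,
          chr c d * zetaC (2^k) ^ iotaN d * (-1:ℂ)^((comb hk a c x).val)) *
            (-1:ℂ)^((∑ j, u j * x j : ZMod 2).val) := by
    refine congrArg _ (Finset.sum_congr rfl fun x _ => ?_)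
    rw [key x, chr]
  rw [step1]
  simp only [WHB, pow_add, Finset.mul_sum, Finset.sum_mul]
  rw [Finset.sum_comm]
  refine Finset.sum_congr rfl fun c _ => ?_
  rw [Finset.sum_comm]
  refine Finset.sum_congr rfl fun d _ => ?_
  refine Finset.sum_congr rfl fun x _ => ?_
  ring

end
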